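/- Let Z be a real vector space, let 𝓐, 𝓑 : Z → Set Z be set-valued mappings, let u ∈ Z, and let α, γ be real numbers with γ ≠ 0. Then the following are equivalent: (i) there exist a ∈ 𝓐(u) and b ∈ 𝓑(u) with a + b = 0; (ii) there exist r, s ∈ Z such that u = s, there exists a ∈ 𝓐(u) with α·u + γ·a − r − s = 0, and there exists b ∈ 𝓑(s) with (1 − 2α)·u + r + α·s + γ·b = 0. -/

import Mathlib

theorem lifted_inclusion_equivalence
    {Z : Type*} [AddCommGroup Z] [Module ℝ Z]
    (𝓐 𝓑 : Z → Set Z) (u : Z) (α γ : ℝ) (hγ : γ ≠ 0) :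
    (∃ a ∈ 𝓐 u, ∃ b ∈ 𝓑 u, a + b = 0) ↔
      (∃ r s : Z, u = s ∧
        (∃ a ∈ 𝓐 u, α • u + γ • a - r - s = 0) ∧
        (∃ b ∈ 𝓑 s, (1 - 2 * α) • u + r + α • s + γ • b = 0)) := by
  constructor
  · rintro ⟨a, ha, b, hb, hab⟩
    refine ⟨α • u + γ • a - u, u, rfl, ⟨a, ha, by abel⟩, ⟨b, hb, ?_⟩⟩
    linear_combination (norm := module) γ • hab
  · rintro ⟨r, _, rfl, ⟨a, ha, hr⟩, ⟨b, hb, hs⟩⟩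
    refine ⟨a, ha, b, hb, (smul_eq_zero.mp ?_).resolve_left hγ⟩
    linear_combination (norm := module) hr + hs
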